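/- Let n ≥ r ≥ 2 be integers and let H > (n−r)/n be a real number. Define g(ξ) = sinh(ξ)^{n−r} − n·H·∫₀^ξ sinh(s)^{n−1}/cosh(s)^{r−1} ds for ξ ≥ 0. Then there exists a unique ρ₀ ∈ (0, ∞) with g(ρ₀) = 0; moreover g(ξ) > 0 for all ξ ∈ (0, ρ₀), g(ξ) < 0 for all ξ > ρ₀, g attains its maximum on (0,∞) at artanh( ((n−r)/(n·H))^{1/r} ), and ρ₀ > artanh( ((n−r)/(n·H))^{1/r} ). -/

import Mathlib

/-!
For `ξ > 0` one has `g'(ξ) = sinh ξ ^ (n-r-1) · cosh ξ · ((n - r) - nH · tanh ξ ^ r)`. Since `tanh`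
increases from `0` towards `1` and `(n - r)/(nH) < 1`, the bracket changes sign exactly once, at
`ξ⋆`: so `g` increases strictly on `[0, ξ⋆]` and decreases strictly on `[ξ⋆, ∞)`. For large `ξ` the
bracket stays below a negative constant while the prefactor is at least `1`, so `g → -∞`. As
`g 0 ≥ 0`, `g` is positive on `(0, ξ⋆]`, and the intermediate value theorem on `[ξ⋆, ∞)` gives
the unique zero `ρ₀ > ξ⋆`.
-/

open Real Set Filter

theorem Real.tanh_lt_tanh {a b : ℝ} : tanh a < tanh b ↔ a < b := by
  rw [← artanh_lt_artanh_iff ⟨neg_one_lt_tanh a, tanh_lt_one a⟩ ⟨neg_one_lt_tanh b, tanh_lt_one b⟩,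
    artanh_tanh, artanh_tanh]

theorem Real.tanh_nonneg {x : ℝ} (hx : 0 ≤ x) : 0 ≤ tanh x := by
  rw [tanh_eq_sinh_div_cosh]
  exact div_nonneg (sinh_nonneg_iff.2 hx) (cosh_pos x).le

theorem tanh_rpow_lt_iff {r t ξ₀ ξ : ℝ} (hr : 0 < r) (ht : 0 ≤ t) (hξ₀ : tanh ξ₀ = t ^ (1 / r))
    (hξ : 0 ≤ ξ) : tanh ξ ^ r < t ↔ ξ < ξ₀ := by
  rw [← lt_rpow_inv_iff_of_pos (tanh_nonneg hξ) ht hr, ← one_div, ← hξ₀, tanh_lt_tanh]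

theorem lt_tanh_rpow_iff {r t ξ₀ ξ : ℝ} (hr : 0 < r) (ht : 0 ≤ t) (hξ₀ : tanh ξ₀ = t ^ (1 / r))
    (hξ : 0 ≤ ξ) : t < tanh ξ ^ r ↔ ξ₀ < ξ := by
  rw [← rpow_inv_lt_iff_of_pos ht (tanh_nonneg hξ) hr, ← one_div, ← hξ₀, tanh_lt_tanh]

theorem tendsto_atBot_of_hasDerivAt_le_neg {f f' : ℝ → ℝ} {δ : ℝ} (hδ : 0 < δ)
    (h : ∀ᶠ x in atTop, HasDerivAt f (f' x) x ∧ f' x ≤ -δ) : Tendsto f atTop atBot := by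
  obtain ⟨a, ha⟩ := eventually_atTop.1 h
  have hbound : ∀ x ≥ a, f x ≤ f a + -δ * (x - a) := by
    intro x hx
    have hcont : ContinuousOn f (Ici a) := fun y hy => (ha y hy).1.continuousAt.continuousWithinAt
    have hdiff : DifferentiableOn ℝ f (interior (Ici a)) := fun y hy =>
      (ha y (interior_subset hy)).1.differentiableAt.differentiableWithinAt
    have hderiv : ∀ y ∈ interior (Ici a), deriv f y ≤ -δ := fun y hy => by
      rw [(ha y (interior_subset hy)).1.deriv]
      exact (ha y (interior_subset hy)).2
    linarith [(convex_Ici a).image_sub_le_mul_sub_of_deriv_le hcont hdiff hderiv a self_mem_Ici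
      x hx hx]
  refine tendsto_atBot_mono' atTop (eventually_atTop.2 ⟨a, hbound⟩) ?_
  exact tendsto_atBot_add_const_left _ _
    ((tendsto_atTop_add_const_right _ _ tendsto_id).const_mul_atTop_of_neg (neg_neg_of_pos hδ))

theorem exists_zero_of_strictMonoOn_of_strictAntiOn {g : ℝ → ℝ} {m : ℝ} (hm : 0 ≤ m)
    (hg : ContinuousOn g (Ici m)) (hmono : StrictMonoOn g (Icc 0 m))
    (hanti : StrictAntiOn g (Ici m)) (hg0 : 0 ≤ g 0) (hgm : 0 < g m)
    (hlim : Tendsto g atTop atBot) :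
    ∃ ρ : ℝ, 0 < ρ ∧ g ρ = 0 ∧
      (∀ ξ : ℝ, 0 < ξ → g ξ = 0 → ξ = ρ) ∧
      (∀ ξ ∈ Ioo (0 : ℝ) ρ, 0 < g ξ) ∧
      (∀ ξ : ℝ, ρ < ξ → g ξ < 0) ∧
      (∀ ξ : ℝ, 0 < ξ → g ξ ≤ g m) ∧
      m < ρ := by
  have hle_max : ∀ ξ, 0 ≤ ξ → g ξ ≤ g m := fun ξ hξ => by
    rcases le_total ξ m with hξm | hmξ
    · exact hmono.monotoneOn ⟨hξ, hξm⟩ ⟨hm, le_rfl⟩ hξm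
    · exact hanti.antitoneOn self_mem_Ici hmξ hmξ
  have hpos_left : ∀ ξ ∈ Ioc 0 m, 0 < g ξ := fun ξ hξ =>
    hg0.trans_lt (hmono ⟨le_rfl, hm⟩ (Ioc_subset_Icc_self hξ) hξ.1)
  obtain ⟨b, hb, hmb⟩ :=
    ((hlim.eventually (eventually_lt_atBot 0)).and (eventually_gt_atTop m)).exists
  obtain ⟨ρ, ⟨hmρ, -⟩, hρ⟩ : ∃ ρ ∈ Ioo m b, g ρ = 0 :=
    intermediate_value_Ioo' hmb.le (hg.mono Icc_subset_Ici_self) ⟨hb, hgm⟩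
  have hneg : ∀ ξ, ρ < ξ → g ξ < 0 := fun ξ hξ =>
    hρ ▸ hanti hmρ.le (hmρ.trans hξ).le hξ
  have hpos : ∀ ξ ∈ Ioo 0 ρ, 0 < g ξ := fun ξ hξ => by
    rcases le_or_gt ξ m with hξm | hmξ
    · exact hpos_left ξ ⟨hξ.1, hξm⟩
    · exact hρ ▸ hanti hmξ.le hmρ.le hξ.2
  refine ⟨ρ, hm.trans_lt hmρ, hρ, fun ξ hξ hgξ => ?_, hpos, hneg,
    fun ξ hξ => hle_max ξ hξ.le, hmρ⟩
  rcases lt_trichotomy ξ ρ with h | h | h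
  · exact absurd hgξ (hpos ξ ⟨hξ, h⟩).ne'
  · exact h
  · exact absurd hgξ (hneg ξ h).ne

theorem continuous_sinh_rpow_div_cosh_rpow {a : ℝ} (b : ℝ) (ha : 0 ≤ a) :
    Continuous fun s => sinh s ^ a / cosh s ^ b :=
  (continuous_sinh.rpow_const fun _ => Or.inr ha).div
    (continuous_cosh.rpow_const fun _ => Or.inl (cosh_pos _).ne')
    fun s => (rpow_pos_of_pos (cosh_pos s) b).ne'

noncomputable def profileG (n r H ξ : ℝ) : ℝ :=
  sinh ξ ^ (n - r) - n * H * ∫ s in (0 : ℝ)..ξ, sinh s ^ (n - 1) / cosh s ^ (r - 1)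

section profileG

variable {n r H : ℝ}

theorem profileG_zero : profileG n r H 0 = 0 ^ (n - r) := by
  simp [profileG]

theorem continuous_profileG (hn : 1 ≤ n) (hrn : r ≤ n) : Continuous (profileG n r H) :=
  (continuous_sinh.rpow_const fun _ => Or.inr (sub_nonneg.2 hrn)).sub <| continuous_const.mul <|
    intervalIntegral.continuous_primitive
      (fun _ _ => (continuous_sinh_rpow_div_cosh_rpow _ (sub_nonneg.2 hn)).intervalIntegrable _ _) 0

theorem hasDerivAt_profileG (hn : 1 ≤ n) {ξ : ℝ} (hξ : 0 < ξ) :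
    HasDerivAt (profileG n r H)
      (sinh ξ ^ (n - r - 1) * cosh ξ * (n - r - n * H * tanh ξ ^ r)) ξ := by
  have hs : 0 < sinh ξ := sinh_pos_iff.2 hξ
  have hc : 0 < cosh ξ := cosh_pos ξ
  have hpow := (hasDerivAt_sinh ξ).rpow_const (p := n - r) (Or.inl hs.ne')
  have hint := ((continuous_sinh_rpow_div_cosh_rpow (r - 1) (sub_nonneg.2 hn)
    ).integral_hasStrictDerivAt 0 ξ).hasDerivAt.const_mul (n * H)
  refine (hpow.sub hint).congr_deriv ?_
  have hsinh : sinh ξ ^ (n - 1) = sinh ξ ^ (n - r - 1) * sinh ξ ^ r := by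
    rw [← rpow_add hs]; ring_nf
  have hcosh : cosh ξ ^ r = cosh ξ ^ (r - 1) * cosh ξ := by
    rw [← rpow_add_one hc.ne', sub_add_cancel]
  have : 0 < cosh ξ ^ (r - 1) := rpow_pos_of_pos hc _
  rw [tanh_eq_sinh_div_cosh, div_rpow hs.le hc.le, hsinh, hcosh]
  field_simp

theorem strictMonoOn_profileG (hn : 1 ≤ n) (hrn : r ≤ n) (hr : 0 < r) (hnH : 0 < n * H) {ξ₀ : ℝ}
    (hξ₀ : tanh ξ₀ = ((n - r) / (n * H)) ^ (1 / r)) :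
    StrictMonoOn (profileG n r H) (Icc 0 ξ₀) := by
  refine strictMonoOn_of_deriv_pos (convex_Icc 0 ξ₀) (continuous_profileG hn hrn).continuousOn
    fun ξ hξ => ?_
  rw [interior_Icc] at hξ
  have hbracket : n * H * tanh ξ ^ r < n - r := by
    rw [← lt_div_iff₀' hnH, tanh_rpow_lt_iff hr (div_nonneg (sub_nonneg.2 hrn) hnH.le) hξ₀ hξ.1.le]
    exact hξ.2
  rw [(hasDerivAt_profileG hn hξ.1).deriv]
  exact mul_pos (mul_pos (rpow_pos_of_pos (sinh_pos_iff.2 hξ.1) _) (cosh_pos ξ))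
    (sub_pos.2 hbracket)

theorem strictAntiOn_profileG (hn : 1 ≤ n) (hrn : r ≤ n) (hr : 0 < r) (hnH : 0 < n * H) {ξ₀ : ℝ}
    (hξ₀ : tanh ξ₀ = ((n - r) / (n * H)) ^ (1 / r)) (hξ₀_nonneg : 0 ≤ ξ₀) :
    StrictAntiOn (profileG n r H) (Ici ξ₀) := by
  refine strictAntiOn_of_deriv_neg (convex_Ici ξ₀) (continuous_profileG hn hrn).continuousOn
    fun ξ hξ => ?_
  rw [interior_Ici] at hξ
  have hξ_pos : 0 < ξ := hξ₀_nonneg.trans_lt hξ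
  have hbracket : n - r < n * H * tanh ξ ^ r := by
    rw [← div_lt_iff₀' hnH,
      lt_tanh_rpow_iff hr (div_nonneg (sub_nonneg.2 hrn) hnH.le) hξ₀ hξ_pos.le]
    exact hξ
  rw [(hasDerivAt_profileG hn hξ_pos).deriv]
  exact mul_neg_of_pos_of_neg (mul_pos (rpow_pos_of_pos (sinh_pos_iff.2 hξ_pos) _) (cosh_pos ξ))
    (sub_neg.2 hbracket)

theorem profileG_pos (hn : 1 ≤ n) (hrn : r ≤ n) (hr : 0 < r) (hnH : 0 < n * H) {ξ₀ : ℝ}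
    (hξ₀ : tanh ξ₀ = ((n - r) / (n * H)) ^ (1 / r)) (hξ₀_nonneg : 0 ≤ ξ₀) :
    0 < profileG n r H ξ₀ := by
  rcases hξ₀_nonneg.eq_or_lt with rfl | hξ₀_pos
  -- `ξ₀ = 0` forces `n = r`, and then `g 0 = 0 ^ 0 = 1`.
  · have hnr : n - r = 0 := by
      rw [tanh_zero, eq_comm, rpow_eq_zero (div_nonneg (sub_nonneg.2 hrn) hnH.le) (by positivity),
        div_eq_zero_iff] at hξ₀
      exact hξ₀.resolve_right hnH.ne'
    rw [profileG_zero, hnr, rpow_zero]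
    exact one_pos
  · calc (0 : ℝ) ≤ profileG n r H 0 := profileG_zero (H := H) ▸ rpow_nonneg le_rfl _
      _ < profileG n r H ξ₀ :=
        strictMonoOn_profileG hn hrn hr hnH hξ₀ ⟨le_rfl, hξ₀_pos.le⟩ ⟨hξ₀_pos.le, le_rfl⟩ hξ₀_pos

theorem tendsto_profileG_atBot (hn : 1 ≤ n) (hrn : r ≤ n) (hr : 0 < r) (hH : n - r < n * H) :
    Tendsto (profileG n r H) atTop atBot := by
  have hnH : 0 < n * H := (sub_nonneg.2 hrn).trans_lt hH
  obtain ⟨t, hrt, ht1⟩ := exists_between ((div_lt_one hnH).2 hH)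
  have ht0 : 0 ≤ t := (div_nonneg (sub_nonneg.2 hrn) hnH.le).trans hrt.le
  have hδ : 0 < n * H * t - (n - r) := sub_pos.2 ((div_lt_iff₀' hnH).1 hrt)
  have htanh : tanh (artanh (t ^ (1 / r))) = t ^ (1 / r) :=
    tanh_artanh ⟨by linarith [rpow_nonneg ht0 (1 / r)], rpow_lt_one ht0 ht1 (by positivity)⟩
  refine tendsto_atBot_of_hasDerivAt_le_neg
    (f' := fun ξ => sinh ξ ^ (n - r - 1) * cosh ξ * (n - r - n * H * tanh ξ ^ r)) hδ ?_
  filter_upwards [eventually_ge_atTop 1, eventually_gt_atTop (artanh (t ^ (1 / r)))]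
    with ξ hξ1 hξ
  have hξ_pos : 0 < ξ := one_pos.trans_le hξ1
  refine ⟨hasDerivAt_profileG hn hξ_pos, ?_⟩
  have hbracket : n - r - n * H * tanh ξ ^ r ≤ -(n * H * t - (n - r)) := by
    linarith [mul_lt_mul_of_pos_left ((lt_tanh_rpow_iff hr ht0 htanh hξ_pos.le).2 hξ) hnH]
  have hs : 1 ≤ sinh ξ := hξ1.trans (self_le_sinh_iff.2 hξ_pos.le)
  have hfactor : 1 ≤ sinh ξ ^ (n - r - 1) * cosh ξ :=
    calc (1 : ℝ) ≤ sinh ξ ^ (n - r) := one_le_rpow hs (sub_nonneg.2 hrn)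
      _ = sinh ξ ^ (n - r - 1) * sinh ξ := by rw [← rpow_add_one (by positivity), sub_add_cancel]
      _ ≤ sinh ξ ^ (n - r - 1) * cosh ξ :=
        mul_le_mul_of_nonneg_left (sinh_lt_cosh ξ).le (rpow_nonneg (by positivity) _)
  calc _ ≤ 1 * (n - r - n * H * tanh ξ ^ r) :=
        mul_le_mul_of_nonpos_right hfactor (hbracket.trans (neg_nonpos.2 hδ.le))
    _ ≤ _ := by rwa [one_mul]

end profileG

/-- for `n ≥ r ≥ 2` and `H > (n−r)/n`, the function
`g(ξ) = sinh(ξ)^(n−r) − nH·I(ξ)` has a unique positive zero `ρ₀`; `g > 0` on `(0,ρ₀)`,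
`g < 0` on `(ρ₀,∞)`, `g` attains its maximum on `(0,∞)` at
`ξ⋆ = artanh(((n−r)/(nH))^(1/r))` (characterized by `tanh ξ⋆ = ((n−r)/(nH))^(1/r)`),
and `ρ₀ > ξ⋆`. -/
theorem stmt11 (n r : ℕ) (hr : 2 ≤ r) (hn : r ≤ n) (H : ℝ)
    (hH : ((n : ℝ) - r) / n < H) (g : ℝ → ℝ)
    (hg : ∀ ξ : ℝ, g ξ
      = Real.sinh ξ ^ ((n : ℝ) - r)
        - (n : ℝ) * H *
          ∫ s in (0 : ℝ)..ξ, Real.sinh s ^ ((n : ℝ) - 1) / Real.cosh s ^ ((r : ℝ) - 1))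
    (ξstar : ℝ) (hξstar : Real.tanh ξstar = (((n : ℝ) - r) / ((n : ℝ) * H)) ^ (1 / (r : ℝ)))
    (hξstar0 : 0 ≤ ξstar) :
    ∃ ρ₀ : ℝ, 0 < ρ₀ ∧ g ρ₀ = 0 ∧
      (∀ ξ : ℝ, 0 < ξ → g ξ = 0 → ξ = ρ₀) ∧
      (∀ ξ ∈ Set.Ioo (0 : ℝ) ρ₀, 0 < g ξ) ∧
      (∀ ξ : ℝ, ρ₀ < ξ → g ξ < 0) ∧
      (∀ ξ : ℝ, 0 < ξ → g ξ ≤ g ξstar) ∧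
      ξstar < ρ₀ := by
  obtain rfl : g = profileG n r H := funext hg
  have hr0 : (0 : ℝ) < r := by exact_mod_cast (by omega : 0 < r)
  have hn1 : (1 : ℝ) ≤ n := by exact_mod_cast (by omega : 1 ≤ n)
  have hrn : (r : ℝ) ≤ n := by exact_mod_cast hn
  have hH' : (n : ℝ) - r < n * H := (div_lt_iff₀' (by linarith)).1 hH
  have hnH : 0 < (n : ℝ) * H := (sub_nonneg.2 hrn).trans_lt hH'
  exact exists_zero_of_strictMonoOn_of_strictAntiOn hξstar0
    (continuous_profileG hn1 hrn).continuousOn (strictMonoOn_profileG hn1 hrn hr0 hnH hξstar)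
    (strictAntiOn_profileG hn1 hrn hr0 hnH hξstar hξstar0)
    (profileG_zero (H := H) ▸ rpow_nonneg le_rfl _) (profileG_pos hn1 hrn hr0 hnH hξstar hξstar0)
    (tendsto_profileG_atBot hn1 hrn hr0 hH')
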